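/- Suppose the system has a dichotomy on a splitting (L1,L2). Then there exist u1 ∈ {0,…,dim L1} and u2 ∈ {0,…,dim L2} such that: (a) the system has a dichotomy on (L1,L2) with uniformity dimensions (u1,u2); and (b) whenever the system has a dichotomy on (L1,L2) with uniformity dimensions (ℓ1,ℓ2), one has ℓ1 ≤ u1 and ℓ2 ≤ u2. The pair (u1,u2) is called the maximal uniformity dimensions of the dichotomy on (L1,L2). -/
import Mathlib


open Set Filter Topology

noncomputable section

abbrev Euc (d : ℕ) := EuclideanSpace ℝ (Fin d)

/-- The solution `x(n, x₀)` of `x(n+1) = A(n) x(n)`, `x(0,x₀) = x₀`. -/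
def sol {d : ℕ} (A : ℕ → (Euc d ≃L[ℝ] Euc d)) : ℕ → Euc d → Euc d
  | 0, x => x
  | n + 1, x => A n (sol A n x)

/-- Boundedness of the coefficients `A(n)` and their inverses. -/
def BddSys {d : ℕ} (A : ℕ → (Euc d ≃L[ℝ] Euc d)) : Prop :=
  (∃ c : ℝ, ∀ n : ℕ, ‖(A n : Euc d →L[ℝ] Euc d)‖ ≤ c) ∧
  (∃ c : ℝ, ∀ n : ℕ, ‖((A n).symm : Euc d →L[ℝ] Euc d)‖ ≤ c)

/-- `D1(γ,U)` holds uniformly (constant `C`). -/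
def D1u {d : ℕ} (A : ℕ → (Euc d ≃L[ℝ] Euc d)) (γ : ℝ) (U : Submodule ℝ (Euc d)) : Prop :=
  ∃ C : ℝ, 0 < C ∧
    ∀ m n : ℕ, m ≤ n → ∀ x₀ ∈ U,
      ‖sol A n x₀‖ ≤ C * Real.exp (γ * ((n : ℝ) - (m : ℝ))) * ‖sol A m x₀‖

/-- `D2(γ,U)` holds uniformly (constant `C`). -/
def D2u {d : ℕ} (A : ℕ → (Euc d ≃L[ℝ] Euc d)) (γ : ℝ) (U : Submodule ℝ (Euc d)) : Prop :=
  ∃ C : ℝ, 0 < C ∧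
    ∀ m n : ℕ, m ≤ n → ∀ x₀ ∈ U,
      C * Real.exp (γ * ((n : ℝ) - (m : ℝ))) * ‖sol A m x₀‖ ≤ ‖sol A n x₀‖

/-- `𝒰` is a set of subspaces of `L` whose union is `L`. -/
def IsCover {d : ℕ} (𝒰 : Set (Submodule ℝ (Euc d))) (L : Submodule ℝ (Euc d)) : Prop :=
  (∀ U ∈ 𝒰, U ≤ L) ∧ (⋃ U ∈ 𝒰, (U : Set (Euc d))) = (L : Set (Euc d))

/-- `𝒢_j(L)` : the set of `j`-dimensional subspaces of `L`. -/
def Gr {d : ℕ} (j : ℕ) (L : Submodule ℝ (Euc d)) : Set (Submodule ℝ (Euc d)) :=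
  {U | U ≤ L ∧ Module.finrank ℝ U = j}

/-- The system has a dichotomy on the splitting `(L1,L2)` with uniformity
dimensions `(j1,j2)`. -/
def DichotomyDim0 {d : ℕ} (A : ℕ → (Euc d ≃L[ℝ] Euc d))
    (L1 L2 : Submodule ℝ (Euc d)) (j1 j2 : ℕ) : Prop :=
  IsCompl L1 L2 ∧ IsCover (Gr j1 L1) L1 ∧ IsCover (Gr j2 L2) L2 ∧
  ∃ α : ℝ, 0 < α ∧ (∀ U ∈ Gr j1 L1, D1u A (-α) U) ∧ (∀ U ∈ Gr j2 L2, D2u A α U)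

lemma sol_zero {d : ℕ} (A : ℕ → (Euc d ≃L[ℝ] Euc d)) : ∀ n, sol A n 0 = 0
  | 0 => rfl
  | n + 1 => by rw [sol, sol_zero A n]; simp

lemma D1u_mono {d : ℕ} {A : ℕ → (Euc d ≃L[ℝ] Euc d)} {γ : ℝ}
    {U V : Submodule ℝ (Euc d)} (hVU : V ≤ U) (h : D1u A γ U) : D1u A γ V := by
  obtain ⟨C, hC, h⟩ := h
  exact ⟨C, hC, fun m n hmn x hx => h m n hmn x (hVU hx)⟩

lemma D2u_mono {d : ℕ} {A : ℕ → (Euc d ≃L[ℝ] Euc d)} {γ : ℝ}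
    {U V : Submodule ℝ (Euc d)} (hVU : V ≤ U) (h : D2u A γ U) : D2u A γ V := by
  obtain ⟨C, hC, h⟩ := h
  exact ⟨C, hC, fun m n hmn x hx => h m n hmn x (hVU hx)⟩

lemma D1u_bot {d : ℕ} (A : ℕ → (Euc d ≃L[ℝ] Euc d)) (γ : ℝ) :
    D1u A γ (⊥ : Submodule ℝ (Euc d)) := by
  refine ⟨1, one_pos, fun m n hmn x hx => ?_⟩
  simp only [Submodule.mem_bot] at hx
  subst hx
  simp [sol_zero]

lemma D2u_bot {d : ℕ} (A : ℕ → (Euc d ≃L[ℝ] Euc d)) (γ : ℝ) :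
    D2u A γ (⊥ : Submodule ℝ (Euc d)) := by
  refine ⟨1, one_pos, fun m n hmn x hx => ?_⟩
  simp only [Submodule.mem_bot] at hx
  subst hx
  simp [sol_zero]

lemma D1u_weaken {d : ℕ} {A : ℕ → (Euc d ≃L[ℝ] Euc d)} {U : Submodule ℝ (Euc d)}
    {α α' : ℝ} (h1 : α' ≤ α) (h : D1u A (-α) U) : D1u A (-α') U := by
  obtain ⟨C, hC, h⟩ := h
  refine ⟨C, hC, fun m n hmn x hx => (h m n hmn x hx).trans ?_⟩
  have hnm : (0:ℝ) ≤ (n:ℝ) - m := by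
    have := (Nat.cast_le (α := ℝ)).mpr hmn; linarith
  gcongr

lemma D2u_weaken {d : ℕ} {A : ℕ → (Euc d ≃L[ℝ] Euc d)} {U : Submodule ℝ (Euc d)}
    {α α' : ℝ} (h1 : α' ≤ α) (h : D2u A α U) : D2u A α' U := by
  obtain ⟨C, hC, h⟩ := h
  refine ⟨C, hC, fun m n hmn x hx => le_trans ?_ (h m n hmn x hx)⟩
  have hnm : (0:ℝ) ≤ (n:ℝ) - m := by
    have := (Nat.cast_le (α := ℝ)).mpr hmn; linarith
  gcongr

/-- Key abstract lemma: for a monotone property `P` holding on a cover of `L`,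
there is a maximal dimension `u` such that `Gr u L` covers `L` and `P` holds
on every member of `Gr u L`. -/
lemma exists_max_dim {d : ℕ} (L : Submodule ℝ (Euc d)) (P : ℝ → Submodule ℝ (Euc d) → Prop)
    (hmono : ∀ α : ℝ, ∀ U V : Submodule ℝ (Euc d), V ≤ U → P α U → P α V)
    (hbot : ∀ α : ℝ, P α (⊥ : Submodule ℝ (Euc d)))
    (hex : ∃ 𝒰 : Set (Submodule ℝ (Euc d)), IsCover 𝒰 L ∧
      ∃ α : ℝ, 0 < α ∧ ∀ U ∈ 𝒰, P α U) :
    ∃ u : ℕ, u ≤ Module.finrank ℝ L ∧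
      (IsCover (Gr u L) L ∧ ∃ α : ℝ, 0 < α ∧ ∀ U ∈ Gr u L, P α U) ∧
      ∀ l : ℕ, (IsCover (Gr l L) L ∧ ∃ α : ℝ, 0 < α ∧ ∀ U ∈ Gr l L, P α U) → l ≤ u := by
  classical
  set S : Set ℕ := {j | IsCover (Gr j L) L ∧ ∃ α : ℝ, 0 < α ∧ ∀ U ∈ Gr j L, P α U} with hS
  -- S is bounded above by finrank L
  have hbdd : ∀ j ∈ S, j ≤ Module.finrank ℝ L := by
    intro j hj
    obtain ⟨⟨hle, hunion⟩, -⟩ := hj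
    have h0 : (0 : Euc d) ∈ (L : Set (Euc d)) := L.zero_mem
    rw [← hunion] at h0
    simp only [Set.mem_iUnion] at h0
    obtain ⟨U, hU, -⟩ := h0
    obtain ⟨hUL, hUr⟩ := hU
    rw [← hUr]
    exact Submodule.finrank_mono hUL
  obtain ⟨𝒰, ⟨h𝒰le, h𝒰union⟩, α, hα, hP⟩ := hex
  -- S is nonempty
  have hne : S.Nonempty := by
    by_cases hL : L = ⊥
    · refine ⟨0, ⟨⟨fun U hU => hU.1, ?_⟩, α, hα, fun U hU => ?_⟩⟩
      · subst hL
        apply Set.Subset.antisymm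
        · exact Set.iUnion₂_subset fun U hU => hU.1
        · intro x hx
          simp only [Set.mem_iUnion]
          exact ⟨⊥, ⟨le_rfl, finrank_bot ℝ (Euc d)⟩, hx⟩
      · have : U = ⊥ := le_bot_iff.mp (hL ▸ hU.1)
        rw [this]; exact hbot α
    · -- L ≠ ⊥ : dimension 1 works
      obtain ⟨y, hyL, hy0⟩ := Submodule.exists_mem_ne_zero_of_ne_bot hL
      refine ⟨1, ⟨⟨fun U hU => hU.1, ?_⟩, α, hα, fun U hU => ?_⟩⟩
      · apply Set.Subset.antisymm
        · exact Set.iUnion₂_subset fun U hU => hU.1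
        · intro x hx
          simp only [Set.mem_iUnion]
          by_cases hx0 : x = 0
          · refine ⟨Submodule.span ℝ {y}, ⟨?_, finrank_span_singleton hy0⟩, ?_⟩
            · rw [Submodule.span_le, Set.singleton_subset_iff]; exact hyL
            · rw [hx0]; exact (Submodule.span ℝ {y}).zero_mem
          · refine ⟨Submodule.span ℝ {x}, ⟨?_, finrank_span_singleton hx0⟩, ?_⟩
            · rw [Submodule.span_le, Set.singleton_subset_iff]; exact hx
            · exact Submodule.mem_span_singleton_self x
      · -- every 1-dim subspace of L satisfies P α
        obtain ⟨hUL, hU1⟩ := hU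
        have hUne : U ≠ ⊥ := by
          intro h
          rw [h, finrank_bot] at hU1
          exact one_ne_zero hU1.symm
        obtain ⟨x, hxU, hx0⟩ := Submodule.exists_mem_ne_zero_of_ne_bot hUne
        have hspan : Submodule.span ℝ {x} = U := by
          apply Submodule.eq_of_le_of_finrank_eq
          · rw [Submodule.span_le, Set.singleton_subset_iff]; exact hxU
          · rw [finrank_span_singleton hx0, hU1]
        have hxL : x ∈ (L : Set (Euc d)) := hUL hxU
        rw [← h𝒰union] at hxL
        simp only [Set.mem_iUnion] at hxL
        obtain ⟨W, hW𝒰, hxW⟩ := hxL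
        have hUW : U ≤ W := by
          rw [← hspan, Submodule.span_le, Set.singleton_subset_iff]; exact hxW
        exact hmono α W U hUW (hP W hW𝒰)
  have hbdda : BddAbove S := ⟨Module.finrank ℝ L, fun j hj => hbdd j hj⟩
  refine ⟨sSup S, hbdd _ (Nat.sSup_mem hne hbdda), Nat.sSup_mem hne hbdda,
    fun l hl => le_csSup hbdda hl⟩

/-- **Existence of maximal uniformity dimensions.** -/
theorem maximal_uniformity_dimensions {d : ℕ} (hd : 1 ≤ d)
    (A : ℕ → (Euc d ≃L[ℝ] Euc d)) (hA : BddSys A)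
    (L1 L2 : Submodule ℝ (Euc d)) (hsplit : IsCompl L1 L2)
    (hdich : ∃ 𝒰1 𝒰2 : Set (Submodule ℝ (Euc d)), IsCover 𝒰1 L1 ∧ IsCover 𝒰2 L2 ∧
      ∃ α : ℝ, 0 < α ∧ (∀ U ∈ 𝒰1, D1u A (-α) U) ∧ (∀ U ∈ 𝒰2, D2u A α U)) :
    ∃ u1 u2 : ℕ, u1 ≤ Module.finrank ℝ L1 ∧ u2 ≤ Module.finrank ℝ L2 ∧
      DichotomyDim0 A L1 L2 u1 u2 ∧
      ∀ l1 l2 : ℕ, DichotomyDim0 A L1 L2 l1 l2 → l1 ≤ u1 ∧ l2 ≤ u2 := by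
  obtain ⟨𝒰1, 𝒰2, hc1, hc2, α, hα, h1, h2⟩ := hdich
  obtain ⟨u1, hu1le, ⟨hcov1, α1, hα1, hP1⟩, hmax1⟩ :=
    exists_max_dim L1 (fun α U => D1u A (-α) U)
      (fun α U V hVU h => D1u_mono hVU h) (fun α => D1u_bot A (-α))
      ⟨𝒰1, hc1, α, hα, h1⟩
  obtain ⟨u2, hu2le, ⟨hcov2, α2, hα2, hP2⟩, hmax2⟩ :=
    exists_max_dim L2 (fun α U => D2u A α U)
      (fun α U V hVU h => D2u_mono hVU h) (fun α => D2u_bot A α)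
      ⟨𝒰2, hc2, α, hα, h2⟩
  refine ⟨u1, u2, hu1le, hu2le,
    ⟨hsplit, hcov1, hcov2, min α1 α2, lt_min hα1 hα2,
      fun U hU => D1u_weaken (min_le_left _ _) (hP1 U hU),
      fun U hU => D2u_weaken (min_le_right _ _) (hP2 U hU)⟩, ?_⟩
  rintro l1 l2 ⟨-, hl1, hl2, β, hβ, hQ1, hQ2⟩
  exact ⟨hmax1 l1 ⟨hl1, β, hβ, hQ1⟩, hmax2 l2 ⟨hl2, β, hβ, hQ2⟩⟩

end
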